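/- arXiv:0903.4611 — 6 statements merged into one kernel-verified Lean document; each statement's English description precedes it below -/
import Mathlib

section
/- If (x, y) is a rational point on the curve y² = x³ − n²x with y ≠ 0, then a = |y/x|, b = 2n|x/y|, c = (x² + n²)/|y| satisfy a² + b² = c² and ab/2 = n. -/
/-
With a = y/x, b = 2nx/y, c = (x² + n²)/y, clearing denominators gives
x²y²(a² + b² − c²) = y⁴ − x²(x² − n²)² = (y² − (x³ − n²x))(y² + (x³ − n²x)),
which vanishes on the curve; the absolute values disappear on squaring. The area is
immediate since a·b = 2n.
-/

theorem ne_zero_of_sq_eq_cube_sub {R : Type*} [CommRing R] [NoZeroDivisors R] {x y m : R}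
    (hy : y ≠ 0) (h : y ^ 2 = x ^ 3 - m ^ 2 * x) : x ≠ 0 := by
  rintro rfl
  exact hy (pow_eq_zero_iff two_ne_zero |>.mp (by simpa using h))

section CongruentTriangle

variable {K : Type*} [Field K] [LinearOrder K] [IsStrictOrderedRing K] {x y m : K}

theorem congruentTriangle_sq_add_sq (hx : x ≠ 0) (hy : y ≠ 0)
    (h : y ^ 2 = x ^ 3 - m ^ 2 * x) :
    |y / x| ^ 2 + (2 * m * |x / y|) ^ 2 = ((x ^ 2 + m ^ 2) / |y|) ^ 2 := by
  rw [div_pow, sq_abs, mul_pow, sq_abs, sq_abs]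
  field_simp
  linear_combination (y ^ 2 + x ^ 3 - m ^ 2 * x) * h

theorem congruentTriangle_area (hx : x ≠ 0) (hy : y ≠ 0) :
    |y / x| * (2 * m * |x / y|) / 2 = m := by
  have hinv : |y / x| * |x / y| = 1 := by
    rw [← abs_mul, div_mul_div_comm, mul_comm y x, div_self (mul_ne_zero hx hy), abs_one]
  calc |y / x| * (2 * m * |x / y|) / 2 = m * (|y / x| * |x / y|) := by ring
    _ = m := by rw [hinv, mul_one]

end CongruentTriangle

theorem stmt_2_general (n : ℕ) (x y : ℚ) (hy : y ≠ 0)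
    (hxy : y ^ 2 = x ^ 3 - n ^ 2 * x) :
    |y / x| ^ 2 + (2 * n * |x / y|) ^ 2 = ((x ^ 2 + n ^ 2) / |y|) ^ 2 ∧
      |y / x| * (2 * n * |x / y|) / 2 = n := by
  have hx : x ≠ 0 := ne_zero_of_sq_eq_cube_sub hy hxy
  exact ⟨congruentTriangle_sq_add_sq hx hy hxy, congruentTriangle_area hx hy⟩

theorem stmt_2 (n : ℕ) (hn : 0 < n) (x y : ℚ) (hy : y ≠ 0)
    (hxy : y ^ 2 = x ^ 3 - n ^ 2 * x) :
    |y / x| ^ 2 + (2 * n * |x / y|) ^ 2 = ((x ^ 2 + n ^ 2) / |y|) ^ 2 ∧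
      |y / x| * (2 * n * |x / y|) / 2 = n :=
  stmt_2_general n x y hy hxy
end

section
/- For any λ in a field with 1 + 2λ ≠ 0, the point (x, y) with x = (1 − 12λ + 4λ²)²/(4(1 + 2λ)²) and y = (1 − 12λ + 4λ²)(1 + 40λ − 104λ² + 160λ³ + 16λ⁴)/(8(1 + 2λ)³) satisfies y² = x³ + dx, where d = 8λ(2λ − 1)². -/
theorem sq_eq_cube_add_mul_of_sq_eq_pow_four_add {K : Type*} [Field K] {A B D d : K}
    (h : B ^ 2 = A ^ 4 + 16 * d * D ^ 4) :
    (A * B / (8 * D ^ 3)) ^ 2 = (A ^ 2 / (4 * D ^ 2)) ^ 3 + d * (A ^ 2 / (4 * D ^ 2)) := by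
  field_simp
  linear_combination A ^ 2 / (64 * D ^ 6) * h

theorem stmt_8_general {K : Type*} [Field K] (l : K) :
    letI x : K := (1 - 12 * l + 4 * l ^ 2) ^ 2 / (4 * (1 + 2 * l) ^ 2)
    letI y : K := (1 - 12 * l + 4 * l ^ 2) *
      (1 + 40 * l - 104 * l ^ 2 + 160 * l ^ 3 + 16 * l ^ 4) / (8 * (1 + 2 * l) ^ 3)
    y ^ 2 = x ^ 3 + (8 * l * (2 * l - 1) ^ 2) * x :=
  sq_eq_cube_add_mul_of_sq_eq_pow_four_add (by ring)

theorem stmt_8 {K : Type*} [Field K] [CharZero K] (l : K) (hl : 1 + 2 * l ≠ 0) :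
    letI x : K := (1 - 12 * l + 4 * l ^ 2) ^ 2 / (4 * (1 + 2 * l) ^ 2)
    letI y : K := (1 - 12 * l + 4 * l ^ 2) *
      (1 + 40 * l - 104 * l ^ 2 + 160 * l ^ 3 + 16 * l ^ 4) / (8 * (1 + 2 * l) ^ 3)
    y ^ 2 = x ^ 3 + (8 * l * (2 * l - 1) ^ 2) * x :=
  stmt_8_general l
end

section
/- Let n be a positive integer with n ≠ 4, and let λ be the unique real root of 32λ³ − 32λ² + 8λ + n² = 0. Define x = (1/(4(n² − 16)²))·(256 + 992n² + 65n⁴ + (1024 − 2688n² − 28n⁴)λ + (1024 + 1920n² + 4n⁴)λ²) and y = (1/(32(n² − 16)³))·(−16384 + 72704n² + 80960n⁴ + 2868n⁶ − n⁸ + (196608 − 462848n² − 145152n⁴ − 1456n⁶)λ + (196608 + 421888n² + 100608n⁴ + 208n⁶)λ²). Then y² = x³ − n²x. -/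
/-!
The cubic factors as `32λ³ - 32λ² + 8λ = 8λ(2λ - 1)²`, so it says `n² = -8λ(2λ - 1)²`. Then
`P = (8λ, 8λ(2λ + 1))` lies on the congruent number curve `y² = x³ - n²x`, and `(x, y)` is the third
point where the tangent at `P` meets the curve, i.e. `-2P`. Once `n²` is eliminated, identifying the
given formulas with the tangent construction is a rational-function identity in `λ`.
-/

open WeierstrassCurve

variable {K : Type*} [Field K]

abbrev congruentNumberCurve (n : K) : Affine K :=
  ({ a₁ := 0, a₂ := 0, a₃ := 0, a₄ := -n ^ 2, a₆ := 0 } : WeierstrassCurve K).toAffine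

namespace congruentNumberCurve

lemma equation_iff {n x y : K} :
    (congruentNumberCurve n).Equation x y ↔ y ^ 2 = x ^ 3 - n ^ 2 * x := by
  rw [Affine.equation_iff]
  ring_nf

lemma addX (n x₁ x₂ ℓ : K) : (congruentNumberCurve n).addX x₁ x₂ ℓ = ℓ ^ 2 - x₁ - x₂ := by
  simp [Affine.addX]

lemma negAddY (n x₁ x₂ y₁ ℓ : K) :
    (congruentNumberCurve n).negAddY x₁ x₂ y₁ ℓ = ℓ * (ℓ ^ 2 - x₁ - x₂ - x₁) + y₁ := by
  rw [Affine.negAddY, addX]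

lemma slope_self [CharZero K] [DecidableEq K] {n x y : K} (hy : y ≠ 0) :
    (congruentNumberCurve n).slope x x y y = (3 * x ^ 2 - n ^ 2) / (2 * y) := by
  rw [Affine.slope_of_Y_ne rfl]
  · simp only [Affine.negY]
    ring
  · simpa [Affine.negY, self_eq_neg] using hy

lemma equation_eight_mul {n l : K} (h : n ^ 2 = -8 * l * (2 * l - 1) ^ 2) :
    (congruentNumberCurve n).Equation (8 * l) (8 * l * (2 * l + 1)) := by
  rw [equation_iff, h]
  ring

lemma slope_eight_mul [CharZero K] [DecidableEq K] {n l : K}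
    (h : n ^ 2 = -8 * l * (2 * l - 1) ^ 2) (hl : l ≠ 0) (hl' : 2 * l + 1 ≠ 0) :
    (congruentNumberCurve n).slope (8 * l) (8 * l) (8 * l * (2 * l + 1)) (8 * l * (2 * l + 1)) =
      (4 * l ^ 2 + 20 * l + 1) / (2 * (2 * l + 1)) := by
  rw [slope_self (by simp [hl, hl']), h]
  field_simp
  ring

end congruentNumberCurve

def pointX (n l : K) : K := (1 / (4 * (n ^ 2 - 16) ^ 2)) *
  (256 + 992 * n ^ 2 + 65 * n ^ 4 +
    (1024 - 2688 * n ^ 2 - 28 * n ^ 4) * l +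
    (1024 + 1920 * n ^ 2 + 4 * n ^ 4) * l ^ 2)

def pointY (n l : K) : K := (1 / (32 * (n ^ 2 - 16) ^ 3)) *
  (-16384 + 72704 * n ^ 2 + 80960 * n ^ 4 + 2868 * n ^ 6 - n ^ 8 +
    (196608 - 462848 * n ^ 2 - 145152 * n ^ 4 - 1456 * n ^ 6) * l +
    (196608 + 421888 * n ^ 2 + 100608 * n ^ 4 + 208 * n ^ 6) * l ^ 2)

variable [CharZero K]

lemma pointX_eq_addX {n l : K} (h : n ^ 2 = -8 * l * (2 * l - 1) ^ 2)
    (hl' : 2 * l + 1 ≠ 0) (h16 : n ^ 2 - 16 ≠ 0) :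
    pointX n l = (congruentNumberCurve n).addX (8 * l) (8 * l)
      ((4 * l ^ 2 + 20 * l + 1) / (2 * (2 * l + 1))) := by
  rw [congruentNumberCurve.addX, pointX, one_div_mul_eq_div, div_eq_iff (by simpa using h16),
    show n ^ 4 = (n ^ 2) ^ 2 by ring, h]
  -- `field_simp` only recognises `2 * l + 1 ≠ 0` if that factor is an atom
  generalize hu : 2 * l + 1 = u at hl' ⊢
  field_simp
  subst hu
  ring

lemma pointY_eq_negAddY {n l : K} (h : n ^ 2 = -8 * l * (2 * l - 1) ^ 2)
    (hl' : 2 * l + 1 ≠ 0) (h16 : n ^ 2 - 16 ≠ 0) :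
    pointY n l = (congruentNumberCurve n).negAddY (8 * l) (8 * l) (8 * l * (2 * l + 1))
      ((4 * l ^ 2 + 20 * l + 1) / (2 * (2 * l + 1))) := by
  rw [congruentNumberCurve.negAddY, pointY, one_div_mul_eq_div, div_eq_iff (by simpa using h16),
    show n ^ 4 = (n ^ 2) ^ 2 by ring, show n ^ 6 = (n ^ 2) ^ 3 by ring,
    show n ^ 8 = (n ^ 2) ^ 4 by ring, h]
  generalize hu : 2 * l + 1 = u at hl' ⊢
  field_simp
  subst hu
  ring

theorem pointY_sq {n l : K} (hn : n ≠ 0) (h16 : n ^ 2 ≠ 16)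
    (hl : 32 * l ^ 3 - 32 * l ^ 2 + 8 * l + n ^ 2 = 0) :
    pointY n l ^ 2 = pointX n l ^ 3 - n ^ 2 * pointX n l := by
  classical
  have h : n ^ 2 = -8 * l * (2 * l - 1) ^ 2 := by linear_combination hl
  have hl0 : l ≠ 0 := by
    rintro rfl
    exact hn (pow_eq_zero_iff two_ne_zero |>.1 (by simpa using h))
  have hl' : 2 * l + 1 ≠ 0 := by
    contrapose! h16
    linear_combination h - 8 * (2 * l ^ 2 - 3 * l + 2) * h16
  have hP := congruentNumberCurve.equation_eight_mul h
  have hb : 8 * l * (2 * l + 1) ≠ 0 := by simp [hl0, hl']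
  have hneg := Affine.equation_negAdd hP hP (by simpa [Affine.negY, self_eq_neg] using hb)
  rwa [congruentNumberCurve.slope_eight_mul h hl0 hl', ← pointX_eq_addX h hl' (sub_ne_zero.2 h16),
    ← pointY_eq_negAddY h hl' (sub_ne_zero.2 h16), congruentNumberCurve.equation_iff] at hneg

theorem stmt_12 (n : ℕ) (hn : 0 < n) (hn4 : n ≠ 4) (l : ℝ)
    (hl : 32 * l ^ 3 - 32 * l ^ 2 + 8 * l + (n : ℝ) ^ 2 = 0) :
    letI x : ℝ := (1 / (4 * ((n : ℝ) ^ 2 - 16) ^ 2)) *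
      (256 + 992 * (n : ℝ) ^ 2 + 65 * (n : ℝ) ^ 4 +
        (1024 - 2688 * (n : ℝ) ^ 2 - 28 * (n : ℝ) ^ 4) * l +
        (1024 + 1920 * (n : ℝ) ^ 2 + 4 * (n : ℝ) ^ 4) * l ^ 2)
    letI y : ℝ := (1 / (32 * ((n : ℝ) ^ 2 - 16) ^ 3)) *
      (-16384 + 72704 * (n : ℝ) ^ 2 + 80960 * (n : ℝ) ^ 4 + 2868 * (n : ℝ) ^ 6 -
        (n : ℝ) ^ 8 +
        (196608 - 462848 * (n : ℝ) ^ 2 - 145152 * (n : ℝ) ^ 4 - 1456 * (n : ℝ) ^ 6) * l +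
        (196608 + 421888 * (n : ℝ) ^ 2 + 100608 * (n : ℝ) ^ 4 + 208 * (n : ℝ) ^ 6) * l ^ 2)
    y ^ 2 = x ^ 3 - (n : ℝ) ^ 2 * x := by
  have h16 : (n : ℝ) ^ 2 ≠ 16 := by
    have : n ^ 2 ≠ 4 ^ 2 := fun h => hn4 (Nat.pow_left_injective two_ne_zero h)
    exact_mod_cast this
  exact pointY_sq (Nat.cast_ne_zero.2 hn.ne') h16 hl
end

section
/- The points (1 + √2, √2 + 2) and (1 − √2, √2 − 2) lie on the elliptic curve Y² = X³ − X and are torsion points of its Mordell–Weil group over ℚ(√2). -/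
/-!
Both points have abscissa `x` with `(x - 1)² = 2`. For such a point of `Y² = X³ - X` the
tangent slope `ℓ = (3x² - 1) / 2y` satisfies `4y² (ℓ² - 2x - 1) = (x² - 2x - 1)² = 0`, so the
doubled point has abscissa `ℓ² - 2x = 1`: it is the `2`-torsion point `(1, 0)`, and the original
points are killed by `4`.
-/

open WeierstrassCurve Affine

abbrev E₁ (F : Type*) [Field F] : Affine F := { a₁ := 0, a₂ := 0, a₃ := 0, a₄ := -1, a₆ := 0 }

namespace E₁

variable {F : Type*} [Field F]

lemma equation_iff {x y : F} : (E₁ F).Equation x y ↔ y ^ 2 = x ^ 3 - x := by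
  rw [Affine.equation_iff]
  constructor <;> intro h <;> linear_combination h

lemma Δ_eq : (E₁ F).Δ = 2 ^ 6 := by
  simp only [WeierstrassCurve.Δ, WeierstrassCurve.b₂, WeierstrassCurve.b₄,
    WeierstrassCurve.b₆, WeierstrassCurve.b₈]
  norm_num

variable [NeZero (2 : F)]

lemma nonsingular_of_sq_eq {x y : F} (h : y ^ 2 = x ^ 3 - x) : (E₁ F).Nonsingular x y :=
  (equation_iff_nonsingular_of_Δ_ne_zero (by rw [Δ_eq]; exact pow_ne_zero 6 two_ne_zero)).mp
    (equation_iff.mpr h)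

lemma negY_ne {x y : F} (hy : y ≠ 0) : y ≠ (E₁ F).negY x y := by
  rw [Affine.negY]
  intro h
  have : (2 : F) * y = 0 := by linear_combination h
  exact hy ((mul_eq_zero.mp this).resolve_left two_ne_zero)

lemma nonsingular_one_zero : (E₁ F).Nonsingular 1 0 := nonsingular_of_sq_eq (by ring)

variable [DecidableEq F]

lemma two_nsmul_some_one_zero : 2 • Point.some 1 0 (nonsingular_one_zero (F := F)) = 0 := by
  rw [two_nsmul]
  exact Point.add_self_of_Y_eq (by rw [Affine.negY]; ring)

lemma two_nsmul_some_of_sq_sub_one_eq_two {x y : F} (h : (E₁ F).Nonsingular x y)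
    (hx : (x - 1) ^ 2 = 2) (hy : y ≠ 0) :
    2 • Point.some x y h = Point.some 1 0 nonsingular_one_zero := by
  have hxy : y ^ 2 = x ^ 3 - x := equation_iff.mp h.1
  have h2y : 2 * y ≠ 0 := mul_ne_zero two_ne_zero hy
  set ℓ := (E₁ F).slope x x y y with hℓ_def
  have hℓ : ℓ * (2 * y) = 3 * x ^ 2 - 1 := by
    have h2y' : y - (E₁ F).negY x y = 2 * y := by rw [Affine.negY]; ring
    rw [hℓ_def, slope_of_Y_ne rfl (negY_ne hy), h2y', div_mul_cancel₀ _ h2y]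
    ring
  have hX : (E₁ F).addX x x ℓ = 1 := by
    have : (2 * y) ^ 2 * (ℓ ^ 2 - 2 * x - 1) = 0 := by
      linear_combination (ℓ * (2 * y) + 3 * x ^ 2 - 1) * hℓ - 4 * (2 * x + 1) * hxy
        + (x ^ 2 - 2 * x - 1) * hx
    rw [Affine.addX]
    linear_combination (mul_eq_zero.mp this).resolve_left (pow_ne_zero 2 h2y)
  have hY : (E₁ F).addY x x y ℓ = 0 := by
    have : 2 * y * (ℓ * (1 - x) + y) = 0 := by
      linear_combination (1 - x) * hℓ + 2 * hxy - (x - 1) * hx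
    rw [Affine.addY, Affine.negAddY, hX, Affine.negY]
    linear_combination -(mul_eq_zero.mp this).resolve_left h2y
  rw [two_nsmul, Point.add_self_of_Y_ne (negY_ne hy), Point.some.injEq]
  exact ⟨hX, hY⟩

lemma four_nsmul_some_of_sq_sub_one_eq_two {x y : F} (h : (E₁ F).Nonsingular x y)
    (hx : (x - 1) ^ 2 = 2) (hy : y ≠ 0) : 4 • Point.some x y h = 0 := by
  rw [show 4 = 2 * 2 from rfl, mul_nsmul, two_nsmul_some_of_sq_sub_one_eq_two h hx hy,
    two_nsmul_some_one_zero]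

end E₁

open WeierstrassCurve in
theorem stmt_16 :
    letI W : Affine ℝ := { a₁ := 0, a₂ := 0, a₃ := 0, a₄ := -1, a₆ := 0 }
    ∃ (h₁ : W.Nonsingular (1 + Real.sqrt 2) (Real.sqrt 2 + 2))
      (h₂ : W.Nonsingular (1 - Real.sqrt 2) (Real.sqrt 2 - 2)),
      (1 + Real.sqrt 2 ∈ Algebra.adjoin ℚ {Real.sqrt 2}) ∧
      (Real.sqrt 2 + 2 ∈ Algebra.adjoin ℚ {Real.sqrt 2}) ∧
      (1 - Real.sqrt 2 ∈ Algebra.adjoin ℚ {Real.sqrt 2}) ∧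
      (Real.sqrt 2 - 2 ∈ Algebra.adjoin ℚ {Real.sqrt 2}) ∧
      (∃ k : ℕ, k ≠ 0 ∧ k • (Affine.Point.some _ _ h₁) = (0 : W.Point)) ∧
      (∃ k : ℕ, k ≠ 0 ∧ k • (Affine.Point.some _ _ h₂) = (0 : W.Point)) := by
  have hs : √2 ^ 2 = 2 := Real.sq_sqrt zero_le_two
  have h₁ : (E₁ ℝ).Nonsingular (1 + √2) (√2 + 2) :=
    E₁.nonsingular_of_sq_eq (by linear_combination (-√2 - 2) * hs)
  have h₂ : (E₁ ℝ).Nonsingular (1 - √2) (√2 - 2) :=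
    E₁.nonsingular_of_sq_eq (by linear_combination (√2 - 2) * hs)
  have hmem : √2 ∈ Algebra.adjoin ℚ {√2} := Algebra.self_mem_adjoin_singleton ℚ _
  refine ⟨h₁, h₂, add_mem (one_mem _) hmem, add_mem hmem (ofNat_mem _ 2),
    sub_mem (one_mem _) hmem, sub_mem hmem (ofNat_mem _ 2),
    ⟨4, four_ne_zero, E₁.four_nsmul_some_of_sq_sub_one_eq_two h₁ ?_ ?_⟩,
    ⟨4, four_ne_zero, E₁.four_nsmul_some_of_sq_sub_one_eq_two h₂ ?_ ?_⟩⟩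
  · linear_combination hs
  · positivity
  · linear_combination hs
  · exact sub_ne_zero.mpr fun h => by norm_num [h] at hs
end

section
/- The equation 11y² = x⁴ + 4 has no solution in rational numbers x, y. -/
/-!
Write `x = a / b` in lowest terms. Then `a ^ 4 + 4 b ^ 4 = 11 (y b ^ 2) ^ 2`, so the integer
`a ^ 4 + 4 b ^ 4` has odd `11`-adic valuation. But `-4` is not a fourth power modulo `11`, so
`11 ∣ a ^ 4 + 4 b ^ 4` would force `11 ∣ a` and `11 ∣ b`; hence the valuation is `0`.
-/

lemma ZMod.eq_zero_and_eq_zero_of_pow_four_add_four_mul_pow_four_eq_zero :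
    ∀ A B : ZMod 11, A ^ 4 + 4 * B ^ 4 = 0 → A = 0 ∧ B = 0 := by
  decide

lemma Int.eleven_dvd_and_eleven_dvd_of_dvd_pow_four_add_four_mul_pow_four {a b : ℤ}
    (h : 11 ∣ a ^ 4 + 4 * b ^ 4) : 11 ∣ a ∧ 11 ∣ b := by
  have h11 : ((11 : ℕ) : ℤ) = 11 := rfl
  simp only [← h11, ← ZMod.intCast_zmod_eq_zero_iff_dvd] at h ⊢
  push_cast at h
  exact ZMod.eq_zero_and_eq_zero_of_pow_four_add_four_mul_pow_four_eq_zero _ _ h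

lemma Rat.prime_mul_sq_ne_intCast (p : ℕ) [Fact p.Prime] {n : ℤ} (hn : ¬ (p : ℤ) ∣ n)
    (z : ℚ) : (p : ℚ) * z ^ 2 ≠ n := by
  intro h
  have hz : z ≠ 0 := by
    rintro rfl
    rw [zero_pow two_ne_zero, mul_zero, eq_comm, Int.cast_eq_zero] at h
    exact hn (h ▸ dvd_zero _)
  have hp : (p : ℚ) ≠ 0 := by exact_mod_cast (Fact.out : p.Prime).ne_zero
  have hval := congrArg (padicValRat p) h
  rw [padicValRat.mul hp (pow_ne_zero 2 hz), padicValRat.pow, padicValRat.self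
    (Fact.out : p.Prime).one_lt, padicValRat.of_int, padicValInt.eq_zero_of_not_dvd hn] at hval
  omega

theorem stmt_18 : ¬ ∃ x y : ℚ, 11 * y ^ 2 = x ^ 4 + 4 := by
  rintro ⟨x, y, h⟩
  have : Fact (Nat.Prime 11) := ⟨by norm_num⟩
  have hden : (x.den : ℚ) ≠ 0 := by positivity
  have hcleared :
      ((11 : ℕ) : ℚ) * (y * x.den ^ 2) ^ 2 = ((x.num ^ 4 + 4 * x.den ^ 4 : ℤ) : ℚ) := by
    rw [← Rat.num_div_den x] at h
    field_simp at h
    push_cast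
    linear_combination h
  refine Rat.prime_mul_sq_ne_intCast 11 (fun hdvd => ?_) _ hcleared
  obtain ⟨hdvd_num, hdvd_den⟩ :=
    Int.eleven_dvd_and_eleven_dvd_of_dvd_pow_four_add_four_mul_pow_four hdvd
  have hcop : IsCoprime x.num x.den := Int.isCoprime_iff_gcd_eq_one.mpr x.reduced
  exact absurd (hcop.isUnit_of_dvd' hdvd_num hdvd_den) (by norm_num [Int.isUnit_iff])
end

section
/- If n is a congruent number (i.e., there exist nonzero rationals a, b, c with a² + b² = c² and ab/2 = n), then n is not a perfect square. -/
/-!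
Scaling a rational right triangle of area `m²` by `1/m` gives one with legs `a, b` and
hypotenuse `c` such that `ab = 2`; then `c⁴ - 2⁴ = (a² - b²)²`, and `a² ≠ b²` since `2` is not a
rational square. This contradicts Fermat's theorem that `x⁴ - y⁴ = z²` has no solution in nonzero
integers (hence rationals), proved by descent on `|x|`: after dividing out `gcd x y`, `x` is odd,
and the parametrisation of the primitive triple `(y², z, x²)` (`y` odd) or `(z, y², x²)` (`y` even,
passing through `x² = u⁴ + 4s⁴` and the triple `(u², 2s², x)`) yields a smaller solution.
-/

theorem Int.sq_of_isCoprime_of_nonneg {a b c : ℤ} (h : IsCoprime a b) (ha : 0 ≤ a)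
    (heq : a * b = c ^ 2) : ∃ d, a = d ^ 2 := by
  obtain ⟨d, rfl | rfl⟩ := Int.sq_of_isCoprime h heq
  · exact ⟨d, rfl⟩
  · exact ⟨d, by linarith [sq_nonneg d]⟩

theorem Int.exists_eq_two_mul_sq_and_eq_sq {m n y : ℤ} (hco : IsCoprime m n) (hm : Even m)
    (hm0 : 0 ≤ m) (hn0 : 0 ≤ n) (hy : Even y) (h : y ^ 2 = 2 * m * n) :
    ∃ s u, m = 2 * s ^ 2 ∧ n = u ^ 2 := by
  obtain ⟨m', rfl⟩ := hm
  obtain ⟨w, rfl⟩ := hy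
  have hco' : IsCoprime m' n := hco.of_isCoprime_of_dvd_left (Dvd.intro_left 2 (two_mul m'))
  have hw : m' * n = w ^ 2 := by linarith
  obtain ⟨s, hs⟩ := Int.sq_of_isCoprime_of_nonneg hco' (by linarith) hw
  obtain ⟨u, hu⟩ := Int.sq_of_isCoprime_of_nonneg hco'.symm hn0 (by linarith : n * m' = w ^ 2)
  exact ⟨s, u, by rw [hs]; ring, hu⟩

def FermatRightTriangle (x y z : ℤ) : Prop :=
  x ≠ 0 ∧ y ≠ 0 ∧ z ≠ 0 ∧ x ^ 4 - y ^ 4 = z ^ 2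

namespace FermatRightTriangle

variable {x y z : ℤ}

theorem exists_isCoprime (h : FermatRightTriangle x y z) :
    ∃ x' y' z', FermatRightTriangle x' y' z' ∧ IsCoprime x' y' ∧ x'.natAbs ≤ x.natAbs := by
  obtain ⟨hx, hy, hz, heq⟩ := h
  obtain ⟨g, x', y', hg, hco, rfl, rfl⟩ := Int.exists_gcd_one' (Int.gcd_pos_of_ne_zero_left y hx)
  have hg0 : (g : ℤ) ≠ 0 := by exact_mod_cast hg.ne'
  obtain ⟨z', rfl⟩ : (g : ℤ) ^ 2 ∣ z := by
    rw [← Int.pow_dvd_pow_iff two_ne_zero]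
    exact ⟨x' ^ 4 - y' ^ 4, by linear_combination -heq⟩
  refine ⟨x', y', z', ⟨left_ne_zero_of_mul hx, left_ne_zero_of_mul hy,
    right_ne_zero_of_mul hz, ?_⟩, Int.isCoprime_iff_gcd_eq_one.mpr hco, ?_⟩
  · exact mul_left_cancel₀ (pow_ne_zero 4 hg0) (by linear_combination heq)
  · rw [Int.natAbs_mul]
    exact Nat.le_mul_of_pos_right _ (by simpa using hg)

theorem odd_of_isCoprime (heq : x ^ 4 - y ^ 4 = z ^ 2) (hco : IsCoprime x y) : Odd x := by
  by_contra hx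
  obtain ⟨a, rfl⟩ := Int.not_odd_iff_even.mp hx
  obtain ⟨b, rfl⟩ : Odd y := by
    refine Int.not_even_iff_odd.mp fun hy => ?_
    have := Int.isUnit_iff.mp (hco.isUnit_of_dvd' (Even.add_self a).two_dvd hy.two_dvd)
    omega
  have key : ∀ a b c : ZMod 4, (a + a) ^ 4 - (2 * b + 1) ^ 4 ≠ c ^ 2 := by decide
  exact key a b z (by exact_mod_cast congrArg (Int.cast : ℤ → ZMod 4) heq)

theorem isCoprime_right (heq : x ^ 4 - y ^ 4 = z ^ 2) (hco : IsCoprime x y) :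
    IsCoprime y z := by
  have : IsCoprime (y ^ 4) (z ^ 2) := by
    simpa [← heq, sub_eq_add_neg] using hco.symm.pow (m := 4) (n := 4) |>.add_mul_left_right (-1)
  exact (IsCoprime.pow_left_iff four_pos).mp ((IsCoprime.pow_right_iff two_pos).mp this)

theorem exists_lt_of_odd (h : FermatRightTriangle x y z) (hco : IsCoprime x y) (hy : Odd y) :
    ∃ x' y' z', FermatRightTriangle x' y' z' ∧ x'.natAbs < x.natAbs := by
  obtain ⟨hx, hy0, hz, heq⟩ := h
  have htriple : PythagoreanTriple (y ^ 2) z (x ^ 2) := by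
    unfold PythagoreanTriple; linear_combination -heq
  obtain ⟨m, n, hy2, rfl, hx2, -, -, -⟩ := htriple.coprime_classification'
    (Int.isCoprime_iff_gcd_eq_one.mp (isCoprime_right heq hco).pow_left)
    (Int.odd_iff.mp hy.pow) (by positivity)
  have hn : n ≠ 0 := right_ne_zero_of_mul hz
  refine ⟨m, n, x * y, ⟨?_, hn, mul_ne_zero hx hy0, ?_⟩, ?_⟩
  · rintro rfl
    nlinarith [sq_pos_of_ne_zero hy0, sq_nonneg n]
  · linear_combination -x ^ 2 * hy2 - (m ^ 2 - n ^ 2) * hx2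
  · rw [Int.natAbs_lt_iff_sq_lt, hx2]
    nlinarith [sq_pos_of_ne_zero hn]

theorem exists_lt_of_sq_eq_pow_four_add {u s : ℤ} (hco : IsCoprime (u ^ 2) (2 * s ^ 2))
    (hu : Odd u) (hs : s ≠ 0) (h : x ^ 2 = u ^ 4 + 4 * s ^ 4) :
    ∃ e f, FermatRightTriangle e f u ∧ e.natAbs < x.natAbs := by
  have htriple : PythagoreanTriple (u ^ 2) (2 * s ^ 2) |x| := by
    unfold PythagoreanTriple; rw [abs_mul_abs_self]; linear_combination -h
  have hs2 : 0 < s ^ 2 := by positivity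
  have hx : 0 < |x| := abs_pos.mpr (by rintro rfl; nlinarith [sq_nonneg (u ^ 2)])
  obtain ⟨M, K, hu2, hsMK, hxMK, hMK, -, hM0⟩ := htriple.coprime_classification'
    (Int.isCoprime_iff_gcd_eq_one.mp hco) (Int.odd_iff.mp hu.pow) hx
  replace hsMK : M * K = s ^ 2 := by linarith
  replace hMK : IsCoprime M K := Int.isCoprime_iff_gcd_eq_one.mpr hMK
  have hM : 0 < M := pos_of_mul_pos_left (hsMK ▸ hs2) (pos_of_mul_pos_right (hsMK ▸ hs2) hM0).le
  have hK : 0 < K := pos_of_mul_pos_right (hsMK ▸ hs2) hM0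
  obtain ⟨e, rfl⟩ := Int.sq_of_isCoprime_of_nonneg hMK hM0 hsMK
  obtain ⟨f, rfl⟩ := Int.sq_of_isCoprime_of_nonneg hMK.symm hK.le (by linarith : K * e ^ 2 = s ^ 2)
  refine ⟨e, f, ⟨?_, ?_, ?_, by linear_combination -hu2⟩, ?_⟩
  · rintro rfl; norm_num at hM
  · rintro rfl; norm_num at hK
  · rintro rfl; norm_num at hu
  · have : (e.natAbs : ℤ) < x.natAbs := by
      rw [Int.natCast_natAbs x, hxMK]
      nlinarith [Int.natAbs_le_self_sq e, Int.le_self_sq (e ^ 2)]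
    exact_mod_cast this

theorem exists_lt_of_even (h : FermatRightTriangle x y z) (hco : IsCoprime x y) (hy : Even y) :
    ∃ x' y' z', FermatRightTriangle x' y' z' ∧ x'.natAbs < x.natAbs := by
  obtain ⟨hx, hy0, hz, heq⟩ := h
  have hz_odd : Odd z := by
    rw [← Int.odd_pow' two_ne_zero, ← heq]
    exact (odd_of_isCoprime heq hco).pow.sub_even (hy.pow_of_ne_zero four_ne_zero)
  have htriple : PythagoreanTriple z (y ^ 2) (x ^ 2) := by
    unfold PythagoreanTriple; linear_combination -heq
  obtain ⟨m, n, -, hy2, hx2, hmn, hpar, hm0⟩ := htriple.coprime_classification'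
    (Int.isCoprime_iff_gcd_eq_one.mp (isCoprime_right heq hco).symm.pow_right)
    (Int.odd_iff.mp hz_odd) (by positivity)
  replace hmn : IsCoprime m n := Int.isCoprime_iff_gcd_eq_one.mpr hmn
  have hmn_pos : 0 < m * n := by nlinarith [sq_pos_of_ne_zero hy0]
  have hn := pos_of_mul_pos_right hmn_pos hm0
  have hm := pos_of_mul_pos_left hmn_pos hn.le
  obtain ⟨s, u, hco', hx2', hu, hs⟩ :
      ∃ s u, IsCoprime (u ^ 2) (2 * s ^ 2) ∧ x ^ 2 = u ^ 4 + 4 * s ^ 4 ∧ Odd u ∧ s ≠ 0 := by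
    rcases hpar with ⟨hm_even, hn_odd⟩ | ⟨hm_odd, hn_even⟩
    · obtain ⟨s, u, rfl, rfl⟩ := Int.exists_eq_two_mul_sq_and_eq_sq hmn
        (Int.even_iff.mpr hm_even) hm0 hn.le hy (by linarith)
      refine ⟨s, u, hmn.symm, by rw [hx2]; ring,
        (Int.odd_pow' two_ne_zero).mp (Int.odd_iff.mpr hn_odd), ?_⟩
      rintro rfl; norm_num at hm
    · obtain ⟨s, u, rfl, rfl⟩ := Int.exists_eq_two_mul_sq_and_eq_sq hmn.symm
        (Int.even_iff.mpr hn_even) hn.le hm0 hy (by linarith)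
      refine ⟨s, u, hmn, by rw [hx2]; ring,
        (Int.odd_pow' two_ne_zero).mp (Int.odd_iff.mpr hm_odd), ?_⟩
      rintro rfl; norm_num at hn
  obtain ⟨e, f, hef, hlt⟩ := exists_lt_of_sq_eq_pow_four_add hco' hu hs hx2'
  exact ⟨e, f, u, hef, hlt⟩

theorem exists_lt_of_isCoprime (h : FermatRightTriangle x y z) (hco : IsCoprime x y) :
    ∃ x' y' z', FermatRightTriangle x' y' z' ∧ x'.natAbs < x.natAbs :=
  (Int.even_or_odd y).elim (h.exists_lt_of_even hco) (h.exists_lt_of_odd hco)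

theorem _root_.not_fermatRightTriangle (x y z : ℤ) : ¬ FermatRightTriangle x y z := by
  induction hN : x.natAbs using Nat.strong_induction_on generalizing x y z with
  | _ N ih =>
    intro h
    obtain ⟨x', y', z', h', hco, hle⟩ := h.exists_isCoprime
    obtain ⟨x'', y'', z'', h'', hlt⟩ := h'.exists_lt_of_isCoprime hco
    exact ih _ (by omega) x'' y'' z'' rfl h''

end FermatRightTriangle

theorem Rat.fourth_pow_sub_fourth_pow_ne_sq {x y z : ℚ} (hx : x ≠ 0) (hy : y ≠ 0) (hz : z ≠ 0) :
    x ^ 4 - y ^ 4 ≠ z ^ 2 := by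
  intro h
  set D : ℚ := x.den * y.den * z.den
  have hD : D ≠ 0 := by positivity
  have hX : (x.num : ℚ) * y.den * z.den = x * D := by rw [← Rat.mul_den_eq_num]; ring
  have hY : (y.num : ℚ) * x.den * z.den = y * D := by rw [← Rat.mul_den_eq_num]; ring
  have hZ : (z.num : ℚ) * z.den * (x.den * y.den) ^ 2 = z * D ^ 2 := by
    rw [← Rat.mul_den_eq_num]; ring
  apply not_fermatRightTriangle (x.num * y.den * z.den) (y.num * x.den * z.den)
    (z.num * z.den * (x.den * y.den) ^ 2)
  refine ⟨?_, ?_, ?_, Int.cast_injective (α := ℚ) ?_⟩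
  · rw [← Int.cast_ne_zero (α := ℚ)]; push_cast; rw [hX]; exact mul_ne_zero hx hD
  · rw [← Int.cast_ne_zero (α := ℚ)]; push_cast; rw [hY]; exact mul_ne_zero hy hD
  · rw [← Int.cast_ne_zero (α := ℚ)]; push_cast; rw [hZ]; exact mul_ne_zero hz (pow_ne_zero 2 hD)
  · push_cast; rw [hX, hY, hZ]; linear_combination D ^ 4 * h

theorem Rat.mul_div_two_ne_one_of_sq_add_sq_eq_sq {a b c : ℚ} (h : a ^ 2 + b ^ 2 = c ^ 2) :
    a * b / 2 ≠ 1 := by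
  intro harea
  have hab : a * b = 2 := by linarith
  have hc : c ≠ 0 := by rintro rfl; nlinarith [sq_nonneg (a - b)]
  have hne : a ^ 2 - b ^ 2 ≠ 0 := by
    intro h0
    refine (by rw [Rat.isSquare_iff]; norm_num : ¬ IsSquare (2 : ℚ)) ⟨a, ?_⟩
    nlinarith [sq_nonneg a]
  exact Rat.fourth_pow_sub_fourth_pow_ne_sq hc two_ne_zero hne
    (by linear_combination -(c ^ 2 + a ^ 2 + b ^ 2) * h + 4 * (a * b + 2) * hab)

theorem stmt_19_general (n : ℕ)
    (hcong : ∃ a b c : ℚ, a ≠ 0 ∧ b ≠ 0 ∧ c ≠ 0 ∧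
      a ^ 2 + b ^ 2 = c ^ 2 ∧ a * b / 2 = n) :
    ¬ IsSquare n := by
  rintro ⟨m, rfl⟩
  obtain ⟨a, b, c, ha, hb, -, h, harea⟩ := hcong
  push_cast at harea
  have hm : (m : ℚ) ≠ 0 := by rintro hm; simp [hm, ha, hb] at harea
  apply Rat.mul_div_two_ne_one_of_sq_add_sq_eq_sq (a := a / m) (b := b / m) (c := c / m)
  · field_simp; linear_combination h
  · field_simp; linear_combination 2 * harea

theorem stmt_19 (n : ℕ) (hn : 0 < n)
    (hcong : ∃ a b c : ℚ, a ≠ 0 ∧ b ≠ 0 ∧ c ≠ 0 ∧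
      a ^ 2 + b ^ 2 = c ^ 2 ∧ a * b / 2 = n) :
    ¬ IsSquare n :=
  stmt_19_general n hcong
end
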